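/- (Garsia–Rodemich–Rumsey inequality) For any p ≥ 1 and θ > 1/p, there exists a constant C_{θ,p} > 0 such that for any continuous function f : [0,T] → ℝ and any 0 ≤ s ≤ t ≤ T, |f(t) - f(s)|^p ≤ C_{θ,p} |t-s|^{θp - 1} ∫₀ᵀ ∫₀ᵀ |f(x) - f(y)|^p / |x-y|^{θp+1} dx dy. -/

import Mathlib

/-!
Garsia's chain argument. Let `k(x, y) = |f x - f y| ^ p / |x - y| ^ q` and
`Φ(x) = ∫_{(s,t]} k(x, y) dy`, so that `∫_{(s,t]} Φ ≤ a`. By Chebyshev there is a `u` with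
`Φ(u) ≤ 4a / (t - s)`. From any `v` with `Φ(v) ≤ 4a / (v - s)`, Chebyshev on `(s, (s + v) / 2)`
gives a `w` with `Φ(w) ≤ 8a / (v - s) ≤ 4a / (w - s)` and `k(v, w) ≤ 64a / (v - s) ^ 2`, hence
`|f v - f w| ≤ (64a) ^ (1/p) (v - s) ^ ((q - 2) / p)`. Iterating gives a sequence tending to `s`
along which these increments decay geometrically, which bounds `|f u - f s|`; the reflection
`x ↦ s + t - x` bounds `|f u - f t|` in the same way. For `q = θp + 1` this is the inequality.
-/

open MeasureTheory Set Filter Topology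
open scoped ENNReal

theorem exists_mem_lt_of_setLIntegral_lt {α : Type*} [MeasurableSpace α] {μ : Measure α}
    {I : Set α} (hI : MeasurableSet I) {g : α → ℝ≥0∞} {c : ℝ≥0∞}
    (h : ∫⁻ x in I, g x ∂μ < c * μ I) : ∃ x ∈ I, g x < c := by
  by_contra! hge
  exact h.not_ge ((setLIntegral_const I c).symm.trans_le (setLIntegral_mono' hI hge))

theorem exists_mem_lt_and_lt_of_setLIntegral {α : Type*} [MeasurableSpace α] {μ : Measure α}
    {I : Set α} (hI : MeasurableSet I) {g₁ g₂ : α → ℝ≥0∞} (hg₂ : AEMeasurable g₂ (μ.restrict I))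
    {L₁ L₂ : ℝ≥0∞} (hL₁ : L₁ ≠ 0) (hL₁' : L₁ ≠ ∞) (hL₂ : L₂ ≠ 0) (hL₂' : L₂ ≠ ∞)
    (h : (∫⁻ x in I, g₁ x ∂μ) / L₁ + (∫⁻ x in I, g₂ x ∂μ) / L₂ < μ I) :
    ∃ x ∈ I, g₁ x < L₁ ∧ g₂ x < L₂ := by
  obtain ⟨x, hxI, hx⟩ := exists_mem_lt_of_setLIntegral_lt (μ := μ) hI
    (g := fun x => g₁ x / L₁ + g₂ x / L₂) (c := 1) <| by
      rw [lintegral_add_right' _ (hg₂.div_const _), one_mul]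
      simpa only [div_eq_mul_inv, lintegral_mul_const' _ _ (ENNReal.inv_ne_top.2 hL₁),
        lintegral_mul_const' _ _ (ENNReal.inv_ne_top.2 hL₂)] using h
  refine ⟨x, hxI, ?_, ?_⟩
  · simpa using (ENNReal.div_lt_iff (.inl hL₁) (.inl hL₁')).1 (le_self_add.trans_lt hx)
  · simpa using (ENNReal.div_lt_iff (.inl hL₂) (.inl hL₂')).1 (le_add_self.trans_lt hx)

theorem abs_sub_le_of_halving_chain {f : ℝ → ℝ} {s K α : ℝ} {P : ℝ → Prop}
    (hf : ContinuousWithinAt f (Ioi s) s) (hK : 0 ≤ K) (hα : 0 < α)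
    (step : ∀ v, s < v → P v →
      ∃ w, s < w ∧ P w ∧ w - s ≤ (v - s) / 2 ∧ |f v - f w| ≤ K * (v - s) ^ α)
    {u : ℝ} (hsu : s < u) (hu : P u) :
    |f u - f s| ≤ K * (u - s) ^ α / (1 - (1 / 2 : ℝ) ^ α) := by
  choose! W hWs hWP hWhalf hWinc using step
  set x : ℕ → ℝ := fun n => W^[n] u with hx
  have hx_succ (n : ℕ) : x (n + 1) = W (x n) := Function.iterate_succ_apply' W n u
  have hgood (n : ℕ) : s < x n ∧ P (x n) := by
    induction n with
    | zero => exact ⟨hsu, hu⟩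
    | succ n ih => rw [hx_succ]; exact ⟨hWs _ ih.1 ih.2, hWP _ ih.1 ih.2⟩
  have hdecay (n : ℕ) : x n - s ≤ (u - s) * (1 / 2) ^ n := by
    induction n with
    | zero => simp [hx]
    | succ n ih =>
      rw [hx_succ, pow_succ]
      linarith [hWhalf _ (hgood n).1 (hgood n).2]
  have hinc (n : ℕ) : dist (f (x n)) (f (x (n + 1))) ≤
      K * (u - s) ^ α * ((1 / 2 : ℝ) ^ α) ^ n := by
    rw [Real.dist_eq, hx_succ, mul_assoc, Real.rpow_pow_comm (by norm_num),
      ← Real.mul_rpow (by linarith) (by positivity)]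
    refine (hWinc _ (hgood n).1 (hgood n).2).trans ?_
    gcongr
    · linarith [(hgood n).1]
    · exact hdecay n
  have hlim : Tendsto x atTop (𝓝[>] s) := by
    refine tendsto_nhdsWithin_iff.2 ⟨?_, .of_forall fun n => (hgood n).1⟩
    have hgap : Tendsto (fun n => x n - s) atTop (𝓝 0) := by
      refine squeeze_zero (fun n => (sub_pos.2 (hgood n).1).le) hdecay ?_
      simpa using (tendsto_pow_atTop_nhds_zero_of_lt_one (by norm_num : (0 : ℝ) ≤ 1 / 2)
        (by norm_num)).const_mul (u - s)
    simpa using hgap.add_const s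
  have := dist_le_of_le_geometric_of_tendsto₀ _ _
    (Real.rpow_lt_one (by norm_num) (by norm_num) hα) hinc ((hf.tendsto).comp hlim)
  simpa [Real.dist_eq, hx] using this

noncomputable def garsiaKernel (f : ℝ → ℝ) (p q x y : ℝ) : ℝ≥0∞ :=
  ENNReal.ofReal (|f x - f y| ^ p / |x - y| ^ q)

theorem measurable_garsiaKernel {f : ℝ → ℝ} (hf : Measurable f) (p q : ℝ) :
    Measurable (Function.uncurry (garsiaKernel f p q)) := by
  unfold garsiaKernel Function.uncurry
  fun_prop

theorem garsiaKernel_comp_sub_left (f : ℝ → ℝ) (p q c x y : ℝ) :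
    garsiaKernel (fun z => f (c - z)) p q x y = garsiaKernel f p q (c - x) (c - y) := by
  rw [garsiaKernel, garsiaKernel, sub_sub_sub_cancel_left, abs_sub_comm y x]

theorem setLIntegral_Ioc_comp_reflect (F : ℝ → ℝ≥0∞) (s t : ℝ) :
    ∫⁻ y in Ioc s t, F (s + t - y) = ∫⁻ y in Ioc s t, F y := by
  have hpre : (fun y => s + t - y) ⁻¹' Ioc s t = Ico s t := by
    ext y; simp only [mem_preimage, mem_Ioc, mem_Ico]; constructor <;> intro h <;>
      constructor <;> linarith [h.1, h.2]
  have h := (Measure.measurePreserving_sub_left volume (s + t)).setLIntegral_comp_preimage_emb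
    (MeasurableEquiv.subLeft (s + t)).measurableEmbedding F (Ioc s t)
  rwa [hpre, Measure.restrict_congr_set Ico_ae_eq_Ioc] at h

theorem abs_sub_rpow_le_of_garsiaKernel_le {f : ℝ → ℝ} {p q v w d M : ℝ} (hq : 0 ≤ q)
    (hM : 0 ≤ M) (hvw : v ≠ w) (hd : |v - w| ≤ d)
    (h : garsiaKernel f p q v w ≤ ENNReal.ofReal (M / d ^ 2)) :
    |f v - f w| ^ p ≤ M * d ^ (q - 2) := by
  have hvw' : 0 < |v - w| := abs_pos.2 (sub_ne_zero.2 hvw)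
  have hd0 : 0 < d := hvw'.trans_le hd
  rw [garsiaKernel, ENNReal.ofReal_le_ofReal_iff (by positivity),
    div_le_iff₀ (by positivity)] at h
  calc |f v - f w| ^ p ≤ M / d ^ 2 * |v - w| ^ q := h
    _ ≤ M / d ^ 2 * d ^ q := by gcongr
    _ = M * d ^ (q - 2) := by
      rw [Real.rpow_sub hd0, Real.rpow_two]; ring

theorem one_sub_half_rpow_pos {α : ℝ} (hα : 0 < α) : 0 < 1 - (1 / 2 : ℝ) ^ α :=
  sub_pos.2 (Real.rpow_lt_one (by norm_num) (by norm_num) hα)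

noncomputable def garsiaConst (p q : ℝ) : ℝ :=
  (2 * 64 ^ p⁻¹ / (1 - (1 / 2 : ℝ) ^ ((q - 2) / p))) ^ p

theorem garsiaConst_pos {p q : ℝ} (hp : 0 < p) (hq : 2 < q) : 0 < garsiaConst p q := by
  have hD := one_sub_half_rpow_pos (div_pos (by linarith : 0 < q - 2) hp)
  unfold garsiaConst
  positivity

section Garsia

variable {f : ℝ → ℝ} {p q s t a : ℝ}

theorem exists_garsia_step (hf : Measurable f) (ha : 0 < a)
    (hB : ∫⁻ x in Ioc s t, ∫⁻ y in Ioc s t, garsiaKernel f p q x y ≤ ENNReal.ofReal a)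
    {v : ℝ} (hv : v ∈ Ioc s t)
    (hΦv : ∫⁻ y in Ioc s t, garsiaKernel f p q v y ≤ ENNReal.ofReal (4 * a / (v - s))) :
    ∃ w ∈ Ioo s (s + (v - s) / 2),
      ∫⁻ y in Ioc s t, garsiaKernel f p q w y < ENNReal.ofReal (8 * a / (v - s)) ∧
      garsiaKernel f p q v w < ENNReal.ofReal (64 * a / (v - s) ^ 2) := by
  have hd : 0 < v - s := sub_pos.2 hv.1
  have hJ : Ioo s (s + (v - s) / 2) ⊆ Ioc s t := fun x hx => ⟨hx.1, by linarith [hx.2, hv.2]⟩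
  refine exists_mem_lt_and_lt_of_setLIntegral (μ := volume) (g₂ := garsiaKernel f p q v)
    measurableSet_Ioo ((measurable_garsiaKernel hf p q).comp measurable_prodMk_left).aemeasurable
    (ENNReal.ofReal_pos.2 (by positivity)).ne' ENNReal.ofReal_ne_top
    (ENNReal.ofReal_pos.2 (by positivity)).ne' ENNReal.ofReal_ne_top ?_
  calc (∫⁻ x in Ioo s (s + (v - s) / 2), ∫⁻ y in Ioc s t, garsiaKernel f p q x y) /
        ENNReal.ofReal (8 * a / (v - s)) +
      (∫⁻ x in Ioo s (s + (v - s) / 2), garsiaKernel f p q v x) /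
        ENNReal.ofReal (64 * a / (v - s) ^ 2)
      ≤ ENNReal.ofReal a / ENNReal.ofReal (8 * a / (v - s)) +
        ENNReal.ofReal (4 * a / (v - s)) / ENNReal.ofReal (64 * a / (v - s) ^ 2) := by
        gcongr
        · exact (lintegral_mono_set hJ).trans hB
        · exact (lintegral_mono_set hJ).trans hΦv
    _ = ENNReal.ofReal ((v - s) / 8 + (v - s) / 16) := by
        rw [← ENNReal.ofReal_div_of_pos (by positivity),
          ← ENNReal.ofReal_div_of_pos (by positivity),
          ← ENNReal.ofReal_add (by positivity) (by positivity)]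
        congr 1
        field_simp
        ring
    _ < volume (Ioo s (s + (v - s) / 2)) := by
        rw [Real.volume_Ioo, ENNReal.ofReal_lt_ofReal_iff (by linarith)]
        linarith

theorem abs_sub_le_of_garsia_left (hp : 0 < p) (hq : 2 < q) (hf : Continuous f) (ha : 0 < a)
    (hB : ∫⁻ x in Ioc s t, ∫⁻ y in Ioc s t, garsiaKernel f p q x y ≤ ENNReal.ofReal a)
    {u : ℝ} (hu : u ∈ Ioc s t)
    (hΦu : ∫⁻ y in Ioc s t, garsiaKernel f p q u y ≤ ENNReal.ofReal (4 * a / (u - s))) :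
    |f u - f s| ≤
      (64 * a) ^ p⁻¹ * (u - s) ^ ((q - 2) / p) / (1 - (1 / 2 : ℝ) ^ ((q - 2) / p)) := by
  refine abs_sub_le_of_halving_chain
    (P := fun v =>
      v ≤ t ∧ ∫⁻ y in Ioc s t, garsiaKernel f p q v y ≤ ENNReal.ofReal (4 * a / (v - s)))
    hf.continuousWithinAt (by positivity) (div_pos (by linarith) hp) ?_ hu.1 ⟨hu.2, hΦu⟩
  rintro v hsv ⟨hvt, hΦv⟩
  obtain ⟨w, hw, hΦw, hKvw⟩ := exists_garsia_step hf.measurable ha hB ⟨hsv, hvt⟩ hΦv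
  have hd : 0 < v - s := sub_pos.2 hsv
  have hws : 0 < w - s := sub_pos.2 hw.1
  refine ⟨w, hw.1, ⟨by linarith [hw.2], hΦw.le.trans (ENNReal.ofReal_le_ofReal ?_)⟩,
    by linarith [hw.2], ?_⟩
  · rw [div_le_div_iff₀ hd hws]
    nlinarith [hw.2]
  · have hvw : |v - w| ≤ v - s := by rw [abs_of_pos (by linarith [hw.2])]; linarith [hw.1]
    have hinc := abs_sub_rpow_le_of_garsiaKernel_le (by linarith) (by positivity)
      (by linarith [hw.2]) hvw hKvw.le
    rw [← Real.le_rpow_inv_iff_of_pos (abs_nonneg _) (by positivity) hp] at hinc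
    rwa [Real.mul_rpow (by positivity) (by positivity), ← Real.rpow_mul hd.le,
      ← div_eq_mul_inv] at hinc

theorem setLIntegral_garsiaKernel_comp_reflect (f : ℝ → ℝ) (p q s t x : ℝ) :
    ∫⁻ y in Ioc s t, garsiaKernel (fun z => f (s + t - z)) p q x y =
      ∫⁻ y in Ioc s t, garsiaKernel f p q (s + t - x) y := by
  simp_rw [garsiaKernel_comp_sub_left]
  exact setLIntegral_Ioc_comp_reflect (garsiaKernel f p q (s + t - x)) s t

theorem setLIntegral_setLIntegral_garsiaKernel_comp_reflect (f : ℝ → ℝ) (p q s t : ℝ) :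
    ∫⁻ x in Ioc s t, ∫⁻ y in Ioc s t, garsiaKernel (fun z => f (s + t - z)) p q x y =
      ∫⁻ x in Ioc s t, ∫⁻ y in Ioc s t, garsiaKernel f p q x y := by
  simp_rw [setLIntegral_garsiaKernel_comp_reflect]
  exact setLIntegral_Ioc_comp_reflect (fun x => ∫⁻ y in Ioc s t, garsiaKernel f p q x y) s t

theorem abs_sub_le_of_garsia (hp : 0 < p) (hq : 2 < q) (hf : Continuous f) (hst : s < t)
    (ha : 0 < a)
    (hB : ∫⁻ x in Ioc s t, ∫⁻ y in Ioc s t, garsiaKernel f p q x y ≤ ENNReal.ofReal a) :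
    |f t - f s| ≤
      2 * ((64 * a) ^ p⁻¹ * (t - s) ^ ((q - 2) / p) / (1 - (1 / 2 : ℝ) ^ ((q - 2) / p))) := by
  have hd : 0 < t - s := sub_pos.2 hst
  obtain ⟨u, hu, hΦu⟩ : ∃ u ∈ Ioo s t,
      ∫⁻ y in Ioc s t, garsiaKernel f p q u y < ENNReal.ofReal (4 * a / (t - s)) := by
    refine exists_mem_lt_of_setLIntegral_lt (μ := volume) measurableSet_Ioo ?_
    rw [Real.volume_Ioo, ← ENNReal.ofReal_mul (by positivity), div_mul_cancel₀ _ hd.ne']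
    exact ((lintegral_mono_set Ioo_subset_Ioc_self).trans hB).trans_lt
      ((ENNReal.ofReal_lt_ofReal_iff (by positivity)).2 (by linarith))
  have hleft := abs_sub_le_of_garsia_left hp hq hf ha hB ⟨hu.1, hu.2.le⟩ <|
    hΦu.le.trans <| ENNReal.ofReal_le_ofReal <|
      div_le_div_of_nonneg_left (by positivity) (by linarith [hu.1]) (by linarith [hu.2])
  have hright := abs_sub_le_of_garsia_left (f := fun z => f (s + t - z)) (u := s + t - u) hp hq
    (hf.comp (continuous_const.sub continuous_id)) ha
    ((setLIntegral_setLIntegral_garsiaKernel_comp_reflect f p q s t).trans_le hB)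
    ⟨by linarith [hu.2], by linarith [hu.1]⟩ <| by
      rw [setLIntegral_garsiaKernel_comp_reflect, sub_sub_cancel]
      exact hΦu.le.trans <| ENNReal.ofReal_le_ofReal <|
        div_le_div_of_nonneg_left (by positivity) (by linarith [hu.2]) (by linarith [hu.1])
  rw [sub_sub_cancel, add_sub_cancel_left, show s + t - u - s = t - u by ring] at hright
  have hD := one_sub_half_rpow_pos (div_pos (by linarith : 0 < q - 2) hp)
  calc |f t - f s| ≤ |f u - f t| + |f u - f s| := by
        rw [abs_sub_comm (f u)]; exact abs_sub_le _ _ _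
    _ ≤ _ := by
      rw [two_mul]
      gcongr
      · exact hright.trans (by gcongr <;> linarith [hu.1, hu.2])
      · exact hleft.trans (by gcongr <;> linarith [hu.1, hu.2])

theorem abs_sub_rpow_le_of_garsia (hp : 0 < p) (hq : 2 < q) (hf : Continuous f) (hst : s < t)
    (ha : 0 < a)
    (hB : ∫⁻ x in Ioc s t, ∫⁻ y in Ioc s t, garsiaKernel f p q x y ≤ ENNReal.ofReal a) :
    |f t - f s| ^ p ≤ garsiaConst p q * (t - s) ^ (q - 2) * a := by
  have hd : 0 < t - s := sub_pos.2 hst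
  have hD := one_sub_half_rpow_pos (div_pos (by linarith : 0 < q - 2) hp)
  calc |f t - f s| ^ p
      ≤ (2 * ((64 * a) ^ p⁻¹ * (t - s) ^ ((q - 2) / p) / (1 - (1 / 2 : ℝ) ^ ((q - 2) / p))))
          ^ p := by
        gcongr
        exact abs_sub_le_of_garsia hp hq hf hst ha hB
    _ = ((2 * 64 ^ p⁻¹ / (1 - (1 / 2 : ℝ) ^ ((q - 2) / p))) * (t - s) ^ ((q - 2) / p) *
          a ^ p⁻¹) ^ p := by
        rw [Real.mul_rpow (by norm_num) ha.le]; ring_nf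
    _ = garsiaConst p q * (t - s) ^ (q - 2) * a := by
        rw [Real.mul_rpow (by positivity) (by positivity),
          Real.mul_rpow (by positivity) (by positivity), Real.rpow_inv_rpow ha.le hp.ne',
          ← Real.rpow_mul hd.le, div_mul_cancel₀ _ hp.ne', garsiaConst]

theorem ofReal_abs_sub_rpow_le_garsia (hp : 0 < p) (hq : 2 < q) (hf : Continuous f)
    (hst : s ≤ t) :
    ENNReal.ofReal (|f t - f s| ^ p) ≤ ENNReal.ofReal (garsiaConst p q * (t - s) ^ (q - 2)) *
      ∫⁻ x in Ioc s t, ∫⁻ y in Ioc s t, garsiaKernel f p q x y := by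
  rcases hst.eq_or_lt with rfl | hst
  · simp [Real.zero_rpow hp.ne']
  set B := ∫⁻ x in Ioc s t, ∫⁻ y in Ioc s t, garsiaKernel f p q x y
  have hC : 0 < garsiaConst p q * (t - s) ^ (q - 2) :=
    mul_pos (garsiaConst_pos hp hq) (Real.rpow_pos_of_pos (sub_pos.2 hst) _)
  rcases eq_or_ne B ∞ with hB | hB
  · rw [hB, ENNReal.mul_top (ENNReal.ofReal_pos.2 hC).ne']
    exact le_top
  have hle : |f t - f s| ^ p / (garsiaConst p q * (t - s) ^ (q - 2)) ≤ B.toReal := by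
    refine le_of_forall_gt_imp_ge_of_dense fun a ha => ?_
    rw [div_le_iff₀' hC]
    exact abs_sub_rpow_le_of_garsia hp hq hf hst (ENNReal.toReal_nonneg.trans_lt ha)
      ((ENNReal.ofReal_toReal hB).symm.trans_le (ENNReal.ofReal_le_ofReal ha.le))
  rw [div_le_iff₀' hC] at hle
  rw [← ENNReal.ofReal_toReal hB, ← ENNReal.ofReal_mul hC.le]
  exact ENNReal.ofReal_le_ofReal hle

end Garsia

theorem stmt_4 (p θ : ℝ) (hp : 1 ≤ p) (hθ : 1 / p < θ) :
    ∃ C > 0, ∀ T : ℝ, 0 < T → ∀ f : ℝ → ℝ, ContinuousOn f (Icc 0 T) →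
      ∀ s t : ℝ, 0 ≤ s → s ≤ t → t ≤ T →
        ENNReal.ofReal (|f t - f s| ^ p) ≤
          ENNReal.ofReal (C * |t - s| ^ (θ * p - 1)) *
            ∫⁻ x in Ioc (0:ℝ) T, ∫⁻ y in Ioc (0:ℝ) T,
              ENNReal.ofReal (|f x - f y| ^ p / |x - y| ^ (θ * p + 1)) := by
  have hp0 : 0 < p := by linarith
  have hq : 2 < θ * p + 1 := by linarith [(div_lt_iff₀ hp0).1 hθ]
  refine ⟨garsiaConst p (θ * p + 1), garsiaConst_pos hp0 hq, fun T _ f hf s t hs hst htT => ?_⟩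
  have hT : 0 ≤ T := hs.trans (hst.trans htT)
  set g := IccExtend hT ((Icc 0 T).domRestrict f)
  have hgf : EqOn g f (Icc 0 T) := fun x hx => IccExtend_of_mem hT _ hx
  have hIoc : Ioc s t ⊆ Ioc 0 T := Ioc_subset_Ioc hs htT
  have hkernel : ∀ x ∈ Ioc (0 : ℝ) T, ∀ y ∈ Ioc (0 : ℝ) T,
      garsiaKernel g p (θ * p + 1) x y =
        ENNReal.ofReal (|f x - f y| ^ p / |x - y| ^ (θ * p + 1)) := fun x hx y hy => by
    rw [garsiaKernel, hgf (Ioc_subset_Icc_self hx), hgf (Ioc_subset_Icc_self hy)]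
  calc ENNReal.ofReal (|f t - f s| ^ p) = ENNReal.ofReal (|g t - g s| ^ p) := by
        rw [hgf ⟨hs.trans hst, htT⟩, hgf ⟨hs, hst.trans htT⟩]
    _ ≤ ENNReal.ofReal (garsiaConst p (θ * p + 1) * (t - s) ^ (θ * p + 1 - 2)) *
          ∫⁻ x in Ioc s t, ∫⁻ y in Ioc s t, garsiaKernel g p (θ * p + 1) x y :=
        ofReal_abs_sub_rpow_le_garsia hp0 hq
          (continuousOn_iff_continuous_domRestrict.1 hf).Icc_extend' hst
    _ ≤ ENNReal.ofReal (garsiaConst p (θ * p + 1) * |t - s| ^ (θ * p - 1)) *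
          ∫⁻ x in Ioc 0 T, ∫⁻ y in Ioc 0 T, garsiaKernel g p (θ * p + 1) x y := by
        rw [abs_of_nonneg (sub_nonneg.2 hst), show θ * p + 1 - 2 = θ * p - 1 by ring]
        refine mul_le_mul_right ?_ _
        exact (lintegral_mono fun x => lintegral_mono_set hIoc).trans (lintegral_mono_set hIoc)
    _ = _ := by
        congr 1
        refine setLIntegral_congr_fun measurableSet_Ioc fun x hx => ?_
        exact setLIntegral_congr_fun measurableSet_Ioc (hkernel x hx)
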